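/- arXiv:1407.0471 — 4 statements merged into one kernel-verified Lean document; each statement's English description precedes it below -/
import Mathlib

section
/- Let A be a symmetric positive definite q×q real matrix and let B = A⁻¹. Then A is a diagonal matrix if and only if A_{ii} · B_{ii} = 1 for all i ∈ {1,…,q}. -/
/-!
With `B = A⁻¹` and `e` the `i`-th basis vector, `v = e - Aᵢᵢ • B e` satisfies
`vᵀ A v = Aᵢᵢ (Aᵢᵢ Bᵢᵢ - 1)`. If `Aᵢᵢ Bᵢᵢ = 1`, positive definiteness forces `v = 0`, so the
`i`-th column of `B` is a multiple of `e`. Hence `B` is diagonal, and so is `A = B⁻¹`.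
-/

namespace Matrix

variable {n R : Type*} [Fintype n] [DecidableEq n] [CommRing R]

theorem IsDiag.inv {A : Matrix n n R} (hA : A.IsDiag) : A⁻¹.IsDiag := by
  rw [← hA.diagonal_diag, inv_diagonal]
  exact isDiag_diagonal _

theorem IsDiag.mul_inv_apply_self {A : Matrix n n R} (hA : A.IsDiag) (hdet : IsUnit A.det)
    (i : n) : A i i * A⁻¹ i i = 1 :=
  calc A i i * A⁻¹ i i = (diagonal A.diag * A⁻¹) i i := (diagonal_mul _ _ _ _).symm
    _ = 1 := by rw [hA.diagonal_diag, mul_nonsing_inv A hdet, one_apply_eq]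

theorem single_sub_smul_inv_mulVec_dotProduct_mulVec {A : Matrix n n R} (hA : A.IsSymm)
    (hdet : IsUnit A.det) (i : n) (c : R) :
    (Pi.single i 1 - c • (A⁻¹ *ᵥ Pi.single i 1)) ⬝ᵥ
        (A *ᵥ (Pi.single i 1 - c • (A⁻¹ *ᵥ Pi.single i 1))) =
      A i i - 2 * c + c ^ 2 * A⁻¹ i i := by
  set e : n → R := Pi.single i 1
  have hAinv : A *ᵥ (A⁻¹ *ᵥ e) = e := by
    rw [mulVec_mulVec, mul_nonsing_inv A hdet, one_mulVec]
  have hcross : (A⁻¹ *ᵥ e) ⬝ᵥ (A *ᵥ e) = 1 := by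
    rw [dotProduct_mulVec, ← mulVec_transpose, hA.eq, hAinv]
    simp [e]
  rw [mulVec_sub, mulVec_smul, hAinv]
  simp only [sub_dotProduct, dotProduct_sub, smul_dotProduct, dotProduct_smul, hcross]
  simp only [mulVec_single, MulOpposite.op_one, one_smul, single_dotProduct, col_apply, one_mul,
    smul_eq_mul, mul_one, dotProduct_single, Pi.single_eq_same, e]
  ring

theorem PosDef.inv_apply_eq_zero_of_mul_inv_apply_self_eq_one {A : Matrix n n ℝ} (hA : A.PosDef)
    {i j : n} (h : A i i * A⁻¹ i i = 1) (hji : j ≠ i) : A⁻¹ j i = 0 := by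
  have hdet : IsUnit A.det := hA.det_pos.ne'.isUnit
  set v : n → ℝ := Pi.single i 1 - A i i • (A⁻¹ *ᵥ Pi.single i 1) with hv_def
  have hquad : v ⬝ᵥ (A *ᵥ v) = A i i * (A i i * A⁻¹ i i - 1) := by
    rw [hv_def, single_sub_smul_inv_mulVec_dotProduct_mulVec
      (isHermitian_iff_isSymm.mp hA.isHermitian) hdet]
    ring
  have hv : v = 0 := by
    by_contra hv
    have hpos := hA.dotProduct_mulVec_pos hv
    rw [star_trivial, hquad, h, sub_self, mul_zero] at hpos
    exact hpos.false
  simpa [v, hji, hA.diag_pos.ne'] using congr_fun hv j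

end Matrix

open Matrix

/-- A symmetric positive definite matrix `A` is diagonal iff `A i i * (A⁻¹) i i = 1`
for every index `i`. -/
theorem isDiag_iff_diag_mul_inv_diag_eq_one {q : ℕ} (A : Matrix (Fin q) (Fin q) ℝ)
    (hA : A.PosDef) :
    (∀ i j, i ≠ j → A i j = 0) ↔ ∀ i, A i i * A⁻¹ i i = 1 := by
  have hdet : IsUnit A.det := hA.det_pos.ne'.isUnit
  refine ⟨fun hdiag => IsDiag.mul_inv_apply_self hdiag hdet, fun h => ?_⟩
  have hinv : A⁻¹.IsDiag := fun j i hji =>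
    hA.inv_apply_eq_zero_of_mul_inv_apply_self_eq_one (h i) hji
  exact nonsing_inv_nonsing_inv A hdet ▸ hinv.inv
end

section
/- Let W be a symmetric positive definite p×p real matrix and let T > 0 be a real number. Define g(Ω) = (det Ω)^{T/2} · exp(−(1/2)·tr(W⁻¹ Ω)) for symmetric positive definite p×p matrices Ω. Then g attains its maximum over the set of symmetric positive definite matrices uniquely at Ω* = T·W; that is, g(Ω) ≤ g(T·W) = (T^p · det W)^{T/2} · e^{−pT/2} for every symmetric positive definite Ω, with equality if and only if Ω = T·W. -/
/-!
Factor `W⁻¹ = Bᴴ B` with `B` invertible. The substitution `M = B Ω Bᴴ` is a bijection of the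
positive definite cone with `T • W ↦ T • 1`, and turns `g(Ω)` into `(det W)^(T/2)` times
`∏ᵢ φ(λᵢ)`, where the `λᵢ > 0` are the eigenvalues of `M` and `φ(x) = x^(T/2) e^(-x/2)`.
Since `log x ≤ x - 1` with equality only at `1`, `φ` has its unique maximum at `x = T`, so the
product is maximal exactly when every eigenvalue equals `T`, i.e. when `M = T • 1`.
-/

open Matrix
open scoped MatrixOrder

namespace Real

lemma rpow_half_mul_exp_neg_half_lt {T x : ℝ} (hT : 0 < T) (hx : 0 < x) (hxT : x ≠ T) :
    x ^ (T / 2) * exp (-x / 2) < T ^ (T / 2) * exp (-T / 2) := by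
  rw [rpow_def_of_pos hx, rpow_def_of_pos hT, ← exp_add, ← exp_add, exp_lt_exp]
  have hlog : log (x / T) < x / T - 1 :=
    log_lt_sub_one_of_pos (div_pos hx hT) (by rwa [Ne, div_eq_one_iff_eq hT.ne'])
  rw [log_div hx.ne' hT.ne'] at hlog
  have : T * (log x - log T) < x - T :=
    calc T * (log x - log T) < T * (x / T - 1) := mul_lt_mul_of_pos_left hlog hT
      _ = x - T := by field_simp
  linarith

lemma rpow_half_mul_exp_neg_half_le {T x : ℝ} (hT : 0 < T) (hx : 0 < x) :
    x ^ (T / 2) * exp (-x / 2) ≤ T ^ (T / 2) * exp (-T / 2) := by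
  rcases eq_or_ne x T with rfl | hxT
  · rfl
  · exact (rpow_half_mul_exp_neg_half_lt hT hx hxT).le

end Real

section GaussianLikelihood

variable {n : Type*} [Fintype n] [DecidableEq n]

lemma Matrix.IsHermitian.eq_smul_one_of_eigenvalues_eq {M : Matrix n n ℝ} (hM : M.IsHermitian)
    {c : ℝ} (h : ∀ i, hM.eigenvalues i = c) : M = c • 1 := by
  rw [← Algebra.algebraMap_eq_smul_one]
  refine CFC.eq_algebraMap_of_spectrum_subset_singleton M c ?_ hM.isSelfAdjoint
  rw [hM.spectrum_real_eq_range_eigenvalues]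
  rintro _ ⟨i, rfl⟩
  exact h i

lemma Matrix.mul_mul_conjTranspose_eq_one_of_inv_eq {W B : Matrix n n ℝ} (hW : IsUnit W.det)
    (hB : IsUnit B) (hWB : W⁻¹ = Bᴴ * B) : B * W * Bᴴ = 1 :=
  hB.mul_right_cancel <| by
    rw [one_mul, Matrix.mul_assoc, Matrix.mul_assoc, ← hWB, mul_nonsing_inv W hW, mul_one]

noncomputable def gaussianLikelihood (T : ℝ) (S Ω : Matrix n n ℝ) : ℝ :=
  Ω.det ^ (T / 2) * Real.exp (-(1 / 2) * (S * Ω).trace)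

lemma gaussianLikelihood_one_conj (T : ℝ) {Ω : Matrix n n ℝ} (hΩ : 0 ≤ Ω.det)
    (B : Matrix n n ℝ) :
    gaussianLikelihood T 1 (B * Ω * Bᴴ) =
      (Bᴴ * B).det ^ (T / 2) * gaussianLikelihood T (Bᴴ * B) Ω := by
  have hBB : 0 ≤ (Bᴴ * B).det := by simpa using mul_self_nonneg B.det
  have hdet : (B * Ω * Bᴴ).det = (Bᴴ * B).det * Ω.det := by
    simp only [det_mul, det_conjTranspose, star_trivial]
    ring
  have htr : (1 * (B * Ω * Bᴴ)).trace = (Bᴴ * B * Ω).trace := by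
    rw [one_mul, trace_mul_cycle, Matrix.mul_assoc]
  rw [gaussianLikelihood, gaussianLikelihood, htr, hdet, Real.mul_rpow hBB hΩ, mul_assoc]

lemma gaussianLikelihood_inv_eq_one_conj (T : ℝ) {W B Ω : Matrix n n ℝ} (hW : 0 < W.det)
    (hWB : W⁻¹ = Bᴴ * B) (hΩ : 0 ≤ Ω.det) :
    gaussianLikelihood T W⁻¹ Ω = W.det ^ (T / 2) * gaussianLikelihood T 1 (B * Ω * Bᴴ) := by
  rw [gaussianLikelihood_one_conj T hΩ, ← hWB, det_nonsing_inv, Ring.inverse_eq_inv,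
    Real.inv_rpow hW.le, ← mul_assoc, mul_inv_cancel₀ (by positivity), one_mul]

lemma gaussianLikelihood_inv_smul_self (T : ℝ) {W : Matrix n n ℝ} (hW : IsUnit W.det) :
    gaussianLikelihood T W⁻¹ (T • W) =
      (T ^ Fintype.card n * W.det) ^ (T / 2) * Real.exp (-(Fintype.card n * T) / 2) := by
  rw [gaussianLikelihood, det_smul, Matrix.mul_smul, nonsing_inv_mul W hW, trace_smul, trace_one,
    smul_eq_mul]
  congr 2
  ring

lemma gaussianLikelihood_one_eq_prod_eigenvalues (T : ℝ) {M : Matrix n n ℝ} (hM : M.PosDef) :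
    gaussianLikelihood T 1 M =
      ∏ i, hM.1.eigenvalues i ^ (T / 2) * Real.exp (-hM.1.eigenvalues i / 2) := by
  have hexp : Real.exp (-(1 / 2) * M.trace) = ∏ i, Real.exp (-hM.1.eigenvalues i / 2) := by
    rw [← Real.exp_sum, hM.1.trace_eq_sum_eigenvalues, Finset.mul_sum]
    simp only [RCLike.ofReal_real_eq_id, id]
    congr 1
    exact Finset.sum_congr rfl fun i _ => by ring
  rw [gaussianLikelihood, one_mul, hexp, hM.1.det_eq_prod_eigenvalues, Finset.prod_mul_distrib]
  simp only [RCLike.ofReal_real_eq_id, id]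
  rw [Real.finsetProd_rpow _ _ fun i _ => (hM.eigenvalues_pos i).le]

lemma gaussianLikelihood_one_smul_one {T : ℝ} (hT : 0 ≤ T) :
    gaussianLikelihood T 1 (T • 1 : Matrix n n ℝ) =
      (T ^ (T / 2) * Real.exp (-T / 2)) ^ Fintype.card n := by
  rw [gaussianLikelihood, one_mul, det_smul, det_one, mul_one, trace_smul, trace_one, mul_pow,
    Real.rpow_pow_comm hT, ← Real.exp_nat_mul, smul_eq_mul]
  congr 2
  ring

lemma gaussianLikelihood_one_lt_of_ne {T : ℝ} (hT : 0 < T) {M : Matrix n n ℝ} (hM : M.PosDef)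
    (hne : M ≠ T • 1) :
    gaussianLikelihood T 1 M < gaussianLikelihood T 1 (T • 1 : Matrix n n ℝ) := by
  obtain ⟨j, hj⟩ : ∃ j, hM.1.eigenvalues j ≠ T := by
    by_contra! h
    exact hne (hM.1.eq_smul_one_of_eigenvalues_eq h)
  rw [gaussianLikelihood_one_eq_prod_eigenvalues T hM, gaussianLikelihood_one_smul_one hT.le,
    ← Finset.card_univ, ← Finset.prod_const]
  have hpos := hM.eigenvalues_pos
  exact Finset.prod_lt_prod
    (fun i _ => mul_pos (Real.rpow_pos_of_pos (hpos i) _) (Real.exp_pos _))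
    (fun i _ => Real.rpow_half_mul_exp_neg_half_le hT (hpos i))
    ⟨j, Finset.mem_univ j, Real.rpow_half_mul_exp_neg_half_lt hT (hpos j) hj⟩

lemma gaussianLikelihood_one_le {T : ℝ} (hT : 0 < T) {M : Matrix n n ℝ} (hM : M.PosDef) :
    gaussianLikelihood T 1 M ≤ gaussianLikelihood T 1 (T • 1 : Matrix n n ℝ) := by
  rcases eq_or_ne M (T • 1) with rfl | hne
  · rfl
  · exact (gaussianLikelihood_one_lt_of_ne hT hM hne).le

end GaussianLikelihood

/-- The function `g(Ω) = (det Ω)^(T/2) * exp(-(1/2) tr(W⁻¹ Ω))` over symmetric positive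
definite matrices attains its maximum uniquely at `Ω* = T • W`, with maximal value
`(T^p det W)^(T/2) e^(-pT/2)`. -/
theorem likelihood_max_at_T_smul {p : ℕ} (W : Matrix (Fin p) (Fin p) ℝ)
    (hW : W.PosDef) (T : ℝ) (hT : 0 < T) :
    (∀ Ω : Matrix (Fin p) (Fin p) ℝ, Ω.PosDef →
      Ω.det ^ (T / 2) * Real.exp (-(1 / 2) * (W⁻¹ * Ω).trace) ≤
        (T ^ p * W.det) ^ (T / 2) * Real.exp (-(p * T) / 2)) ∧
    (T • W).det ^ (T / 2) * Real.exp (-(1 / 2) * (W⁻¹ * (T • W)).trace) =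
      (T ^ p * W.det) ^ (T / 2) * Real.exp (-(p * T) / 2) ∧
    ∀ Ω : Matrix (Fin p) (Fin p) ℝ, Ω.PosDef →
      (Ω.det ^ (T / 2) * Real.exp (-(1 / 2) * (W⁻¹ * Ω).trace) =
          (T ^ p * W.det) ^ (T / 2) * Real.exp (-(p * T) / 2)
        ↔ Ω = T • W) := by
  obtain ⟨B, hB, hWB⟩ :=
    CStarAlgebra.isStrictlyPositive_iff_eq_star_mul_self.mp hW.inv.isStrictlyPositive
  rw [star_eq_conjTranspose] at hWB
  have hdetW := hW.det_pos
  have hreduce (Ω : Matrix (Fin p) (Fin p) ℝ) (hΩ : Ω.PosDef) :=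
    gaussianLikelihood_inv_eq_one_conj T hdetW hWB hΩ.det_pos.le
  have hconj : B * (T • W) * Bᴴ = T • 1 := by
    rw [Matrix.mul_smul, Matrix.smul_mul,
      mul_mul_conjTranspose_eq_one_of_inv_eq hdetW.ne'.isUnit hB hWB]
  have hval := gaussianLikelihood_inv_smul_self T hdetW.ne'.isUnit
  rw [Fintype.card_fin] at hval
  have hMpos {Ω : Matrix (Fin p) (Fin p) ℝ} (hΩ : Ω.PosDef) : (B * Ω * Bᴴ).PosDef :=
    hB.posDef_star_right_conjugate_iff.mpr hΩ
  refine ⟨fun Ω hΩ => ?_, hval, fun Ω hΩ => ⟨fun heq => ?_, fun h => h ▸ hval⟩⟩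
  · change gaussianLikelihood T W⁻¹ Ω ≤ _
    rw [← hval, hreduce Ω hΩ, hreduce _ (hW.smul hT), hconj]
    gcongr
    exact gaussianLikelihood_one_le hT (hMpos hΩ)
  · change gaussianLikelihood T W⁻¹ Ω = _ at heq
    rw [← hval, hreduce Ω hΩ, hreduce _ (hW.smul hT), hconj] at heq
    have hstd : B * Ω * Bᴴ = T • 1 := by
      by_contra hne
      exact (gaussianLikelihood_one_lt_of_ne hT (hMpos hΩ) hne).ne
        (mul_left_cancel₀ (by positivity) heq)
    rw [← hconj] at hstd
    exact hB.mul_left_cancel (hB.star.mul_right_cancel hstd)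
end

section
/- Let W be a symmetric positive definite p×p real matrix and T > 0 a real number. Then the likelihood ratio (sup over symmetric positive definite Ω of (det Ω)^{T/2} exp(−(1/2) tr(W⁻¹Ω))) divided by (sup over vectors ω with positive entries of (∏_i ω_i)^{T/2} exp(−(1/2) ∑_i ω_i (W⁻¹)_{ii})) equals ( det(W⁻¹) / ∏_{i=1}^p (W⁻¹)_{ii} )^{−T/2}, which in turn equals ( det W · ∏_{i=1}^p (W⁻¹)_{ii} )^{T/2}. -/
/-!
Let `f x = x ^ (T / 2) * exp (-x / 2)`, which on `x ≥ 0` peaks at `x = T` (from `log y ≤ y - 1`).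
With `a = diag W⁻¹`, each factor of the denominator's objective is `aᵢ ^ (-T / 2) * f (ωᵢ aᵢ)`,
so its maximum `(∏ aᵢ) ^ (-T / 2) * f T ^ p` is attained at `ωᵢ = T / aᵢ`. For the numerator,
conjugating by `S = √(W⁻¹)` writes the objective as `det W⁻¹ ^ (-T / 2) * ∏ f μᵢ` over the
eigenvalues `μᵢ` of `S Ω S`, with maximum `det W⁻¹ ^ (-T / 2) * f T ^ p` attained at `Ω = T W`.
The common factor `f T ^ p` cancels in the ratio.
-/

open Matrix
open scoped MatrixOrder

section Scalar

variable {T : ℝ}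

theorem rpow_mul_exp_neg_half_le (hT : 0 < T) {x : ℝ} (hx : 0 ≤ x) :
    x ^ (T / 2) * Real.exp (-(x / 2)) ≤ T ^ (T / 2) * Real.exp (-(T / 2)) := by
  rcases hx.eq_or_lt with rfl | hx
  · rw [Real.zero_rpow (by positivity), zero_mul]
    positivity
  rw [Real.rpow_def_of_pos hx, Real.rpow_def_of_pos hT, ← Real.exp_add, ← Real.exp_add,
    Real.exp_le_exp]
  have hlog := Real.log_le_sub_one_of_pos (div_pos hx hT)
  rw [Real.log_div hx.ne' hT.ne'] at hlog
  have hxT : x / T * T = x := div_mul_cancel₀ x hT.ne'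
  nlinarith [mul_le_mul_of_nonneg_right hlog hT.le]

theorem rpow_mul_exp_neg_mul_half_le (hT : 0 < T) {a x : ℝ} (ha : 0 < a) (hx : 0 ≤ x) :
    x ^ (T / 2) * Real.exp (-(x * a / 2)) ≤
      a ^ (-(T / 2)) * (T ^ (T / 2) * Real.exp (-(T / 2))) := by
  have hpeak := rpow_mul_exp_neg_half_le hT (mul_nonneg hx ha.le)
  have hapos : 0 < a ^ (T / 2) := Real.rpow_pos_of_pos ha _
  rw [Real.rpow_neg ha.le, ← div_eq_inv_mul, le_div_iff₀ hapos]
  calc x ^ (T / 2) * Real.exp (-(x * a / 2)) * a ^ (T / 2)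
      = (x * a) ^ (T / 2) * Real.exp (-(x * a / 2)) := by
        rw [Real.mul_rpow hx ha.le]; ring
    _ ≤ _ := hpeak

theorem pow_rpow_mul_exp_eq (hT : 0 ≤ T) (k : ℕ) :
    (T ^ k) ^ (T / 2) * Real.exp (-(1 / 2) * (T * k)) =
      (T ^ (T / 2) * Real.exp (-(T / 2))) ^ k := by
  rw [← Real.rpow_pow_comm hT, mul_pow, ← Real.exp_nat_mul]
  ring_nf

end Scalar

section Product

variable {n : Type*} [Fintype n] {T : ℝ}

theorem prod_rpow_mul_exp_neg_sum_eq {ω : n → ℝ} (hω : ∀ i, 0 ≤ ω i) (a : n → ℝ) :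
    (∏ i, ω i) ^ (T / 2) * Real.exp (-(1 / 2) * ∑ i, ω i * a i) =
      ∏ i, ω i ^ (T / 2) * Real.exp (-(ω i * a i / 2)) := by
  rw [← Real.finsetProd_rpow _ _ fun i _ => hω i, Finset.mul_sum, Real.exp_sum,
    ← Finset.prod_mul_distrib]
  congr! 3 with i
  ring

theorem prod_rpow_mul_exp_neg_sum_le (hT : 0 < T) {a ω : n → ℝ} (ha : ∀ i, 0 < a i)
    (hω : ∀ i, 0 ≤ ω i) :
    (∏ i, ω i) ^ (T / 2) * Real.exp (-(1 / 2) * ∑ i, ω i * a i) ≤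
      (∏ i, a i) ^ (-(T / 2)) * (T ^ (T / 2) * Real.exp (-(T / 2))) ^ Fintype.card n := by
  rw [prod_rpow_mul_exp_neg_sum_eq hω, ← Real.finsetProd_rpow _ _ fun i _ => (ha i).le,
    ← Finset.card_univ, ← Finset.prod_const, ← Finset.prod_mul_distrib]
  exact Finset.prod_le_prod (fun i _ => mul_nonneg (Real.rpow_nonneg (hω i) _) (Real.exp_pos _).le)
    fun i _ => rpow_mul_exp_neg_mul_half_le hT (ha i) (hω i)

theorem isGreatest_prod_rpow_mul_exp_neg_sum (hT : 0 < T) {a : n → ℝ} (ha : ∀ i, 0 < a i) :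
    IsGreatest {x : ℝ | ∃ ω : n → ℝ, (∀ i, 0 < ω i) ∧
        x = (∏ i, ω i) ^ (T / 2) * Real.exp (-(1 / 2) * ∑ i, ω i * a i)}
      ((∏ i, a i) ^ (-(T / 2)) * (T ^ (T / 2) * Real.exp (-(T / 2))) ^ Fintype.card n) := by
  refine ⟨⟨fun i => T / a i, fun i => div_pos hT (ha i), ?_⟩, ?_⟩
  · have hsum : ∑ i, T / a i * a i = T * Fintype.card n := by
      simp [div_mul_cancel₀ T (ha _).ne', mul_comm]
    have hprod : ∏ i, T / a i = T ^ Fintype.card n / ∏ i, a i := by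
      rw [Finset.prod_div_distrib, Finset.prod_const, Finset.card_univ]
    have hapos : 0 < ∏ i, a i := Finset.prod_pos fun i _ => ha i
    rw [hsum, hprod, Real.div_rpow (by positivity) hapos.le, ← pow_rpow_mul_exp_eq hT.le,
      Real.rpow_neg hapos.le]
    ring
  · rintro x ⟨ω, hω, rfl⟩
    exact prod_rpow_mul_exp_neg_sum_le hT ha fun i => (hω i).le

end Product

namespace Matrix

variable {n : Type*} [Fintype n] [DecidableEq n] {T : ℝ}

theorem PosSemidef.det_rpow_mul_exp_neg_trace_le (hT : 0 < T) {B : Matrix n n ℝ}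
    (hB : B.PosSemidef) :
    B.det ^ (T / 2) * Real.exp (-(1 / 2) * B.trace) ≤
      (T ^ (T / 2) * Real.exp (-(T / 2))) ^ Fintype.card n := by
  have hdet : B.det = ∏ i, hB.1.eigenvalues i := by simpa using hB.1.det_eq_prod_eigenvalues
  have htrace : B.trace = ∑ i, hB.1.eigenvalues i * 1 := by
    simpa using hB.1.trace_eq_sum_eigenvalues
  simpa [hdet, htrace] using
    prod_rpow_mul_exp_neg_sum_le hT (fun _ => one_pos) hB.eigenvalues_nonneg

theorem PosDef.det_rpow_mul_exp_neg_trace_mul_le (hT : 0 < T) {A Ω : Matrix n n ℝ}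
    (hA : A.PosDef) (hΩ : Ω.PosSemidef) :
    Ω.det ^ (T / 2) * Real.exp (-(1 / 2) * (A * Ω).trace) ≤
      A.det ^ (-(T / 2)) * (T ^ (T / 2) * Real.exp (-(T / 2))) ^ Fintype.card n := by
  set S := CFC.sqrt A
  have hSS : S * S = A := CFC.sqrt_mul_sqrt_self A hA.posSemidef.nonneg
  have hS : S.IsHermitian := (CFC.sqrt_nonneg A).posSemidef.1
  have hB : (S * Ω * S).PosSemidef := by
    have h := hΩ.conjTranspose_mul_mul_same S
    rwa [hS.eq] at h
  have htrace : (A * Ω).trace = (S * Ω * S).trace := by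
    rw [← hSS, mul_assoc, Matrix.trace_mul_comm, Matrix.mul_assoc]
  have hdet : Ω.det = (S * Ω * S).det / A.det := by
    rw [eq_div_iff hA.det_pos.ne', ← hSS]
    simp only [Matrix.det_mul]
    ring
  have hAdet := hA.det_pos
  rw [hdet, htrace, Real.div_rpow hB.det_nonneg hAdet.le, Real.rpow_neg hAdet.le,
    div_mul_eq_mul_div, div_eq_inv_mul]
  exact mul_le_mul_of_nonneg_left (hB.det_rpow_mul_exp_neg_trace_le hT) (by positivity)

theorem PosDef.isGreatest_det_rpow_mul_exp_neg_trace_mul (hT : 0 < T) {A : Matrix n n ℝ}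
    (hA : A.PosDef) :
    IsGreatest {x : ℝ | ∃ Ω : Matrix n n ℝ, Ω.PosDef ∧
        x = Ω.det ^ (T / 2) * Real.exp (-(1 / 2) * (A * Ω).trace)}
      (A.det ^ (-(T / 2)) * (T ^ (T / 2) * Real.exp (-(T / 2))) ^ Fintype.card n) := by
  refine ⟨⟨T • A⁻¹, hA.inv.smul hT, ?_⟩, ?_⟩
  · have hAdet := hA.det_pos
    have hdet : (T • A⁻¹).det = T ^ Fintype.card n / A.det := by
      rw [Matrix.det_smul, Matrix.det_nonsing_inv, Ring.inverse_eq_inv', div_eq_mul_inv]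
    have htrace : (A * (T • A⁻¹)).trace = T * Fintype.card n := by
      rw [Matrix.mul_smul, Matrix.mul_nonsing_inv A (isUnit_iff_ne_zero.mpr hAdet.ne'),
        Matrix.trace_smul, Matrix.trace_one, smul_eq_mul]
    rw [hdet, htrace, Real.div_rpow (by positivity) hAdet.le, ← pow_rpow_mul_exp_eq hT.le,
      Real.rpow_neg hAdet.le]
    ring
  · rintro x ⟨Ω, hΩ, rfl⟩
    exact hA.det_rpow_mul_exp_neg_trace_mul_le hT hΩ.posSemidef

end Matrix

/-- The likelihood ratio: the supremum of `(det Ω)^(T/2) exp(-(1/2) tr(W⁻¹Ω))` over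
symmetric positive definite `Ω`, divided by the supremum of
`(∏ i, ω i)^(T/2) exp(-(1/2) ∑ i, ω i (W⁻¹) i i)` over positive vectors `ω`, equals
`(det W⁻¹ / ∏ i, (W⁻¹) i i)^(-T/2) = (det W * ∏ i, (W⁻¹) i i)^(T/2)`. -/
theorem likelihood_ratio_eq {p : ℕ} (W : Matrix (Fin p) (Fin p) ℝ)
    (hW : W.PosDef) (T : ℝ) (hT : 0 < T) :
    sSup {x : ℝ | ∃ Ω : Matrix (Fin p) (Fin p) ℝ, Ω.PosDef ∧
          x = Ω.det ^ (T / 2) * Real.exp (-(1 / 2) * (W⁻¹ * Ω).trace)} /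
        sSup {x : ℝ | ∃ ω : Fin p → ℝ, (∀ i, 0 < ω i) ∧
          x = (∏ i, ω i) ^ (T / 2) * Real.exp (-(1 / 2) * ∑ i, ω i * W⁻¹ i i)} =
      (W⁻¹.det / ∏ i, W⁻¹ i i) ^ (-(T / 2)) ∧
    (W⁻¹.det / ∏ i, W⁻¹ i i) ^ (-(T / 2)) = (W.det * ∏ i, W⁻¹ i i) ^ (T / 2) := by
  have hA : W⁻¹.PosDef := hW.inv
  have hdiag : ∀ i, 0 < W⁻¹ i i := fun i => hA.diag_pos
  have hprod : 0 < ∏ i, W⁻¹ i i := Finset.prod_pos fun i _ => hdiag i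
  have hpeak : 0 < (T ^ (T / 2) * Real.exp (-(T / 2))) ^ Fintype.card (Fin p) := by positivity
  constructor
  · rw [(hA.isGreatest_det_rpow_mul_exp_neg_trace_mul hT).csSup_eq,
      (isGreatest_prod_rpow_mul_exp_neg_sum hT hdiag).csSup_eq, mul_div_mul_right _ _ hpeak.ne',
      Real.div_rpow hA.det_pos.le hprod.le]
  · have hprod' : 0 < W.det * ∏ i, W⁻¹ i i := mul_pos hW.det_pos hprod
    rw [Matrix.det_nonsing_inv, Ring.inverse_eq_inv', div_eq_mul_inv, ← mul_inv,
      Real.inv_rpow hprod'.le, Real.rpow_neg hprod'.le, inv_inv]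
end

section
/- Let (Y_i)_{i≥1} be a sequence of independent real random variables on a probability space such that Y_i has the Gaussian distribution with mean μ_i ∈ ℝ and variance 1. For p ≥ 1 set Z_p = ∑_{i=1}^p Y_i² and λ_p = ∑_{i=1}^p μ_i², and assume that the sequence (λ_p/p)_{p≥1} is bounded. Then Z_p/p − 1 − λ_p/p converges to 0 almost surely as p → ∞. -/
open MeasureTheory ProbabilityTheory Filter

/-!
Write `W i = Y i - μ i`. The `W i` are independent standard Gaussians and
`Y i ^ 2 = W i ^ 2 + 2 μ i W i + μ i ^ 2`, so it suffices that `(∑_{i<p} W i ^ 2) / p → 1` and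
`(∑_{i<p} μ i W i) / p → 0` almost surely. The first is the strong law of large numbers for the
i.i.d. variables `W i ^ 2` of mean `1`. For the second, `∑_{i<p} μ i W i` is sub-Gaussian with
variance proxy `λ p ≤ C p`, so the Chernoff bound gives
`P(|∑_{i<p} μ i W i| ≥ ε p) ≤ 2 exp (-ε ^ 2 p / 2C)`; this is summable in `p`, and Borel–Cantelli
concludes.
-/

open Real Finset
open scoped NNReal ENNReal Topology

namespace ProbabilityTheory

variable {Ω : Type*} [MeasurableSpace Ω] {P : Measure Ω}

section Gaussian

variable {Y : Ω → ℝ} {m : ℝ} {v : ℝ≥0}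

lemma aemeasurable_of_map_eq_gaussianReal (hY : P.map Y = gaussianReal m v) : AEMeasurable Y P :=
  aemeasurable_of_map_neZero (by rw [hY]; infer_instance)

lemma map_sub_const_eq_gaussianReal (hY : P.map Y = gaussianReal m v) :
    P.map (fun ω ↦ Y ω - m) = gaussianReal 0 v := by
  change P.map ((· - m) ∘ Y) = _
  rw [← AEMeasurable.map_map_of_aemeasurable (by fun_prop)
    (aemeasurable_of_map_eq_gaussianReal hY), hY, gaussianReal_map_sub_const, sub_self]

lemma integral_sub_sq_of_map_eq_gaussianReal (hY : P.map Y = gaussianReal m v) :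
    ∫ ω, (Y ω - m) ^ 2 ∂P = v := by
  have hYm := aemeasurable_of_map_eq_gaussianReal hY
  have h_mean : P[Y] = m := by
    rw [← integral_id_gaussianReal (μ := m) (v := v), ← hY, integral_map hYm (by fun_prop)]
  rw [← h_mean, ← variance_eq_integral hYm, ← variance_id_map hYm, hY, variance_id_gaussianReal]

lemma hasSubgaussianMGF_id_gaussianReal (v : ℝ≥0) :
    HasSubgaussianMGF id v (gaussianReal 0 v) where
  integrable_exp_mul t := integrable_exp_mul_gaussianReal t
  mgf_le t := by simp [mgf_id_gaussianReal]

lemma hasSubgaussianMGF_sub_of_map_eq_gaussianReal (hY : P.map Y = gaussianReal m v) :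
    HasSubgaussianMGF (fun ω ↦ Y ω - m) v P := by
  have hYm := aemeasurable_of_map_eq_gaussianReal hY
  rw [← HasSubgaussianMGF.id_map_iff (by fun_prop), map_sub_const_eq_gaussianReal hY]
  exact hasSubgaussianMGF_id_gaussianReal v

end Gaussian

namespace HasSubgaussianMGF

variable {X : Ω → ℝ} {c : ℝ≥0}

lemma mono (h : HasSubgaussianMGF X c P) {c' : ℝ≥0} (hc : c ≤ c') :
    HasSubgaussianMGF X c' P where
  integrable_exp_mul := h.integrable_exp_mul
  mgf_le t := (h.mgf_le t).trans (exp_le_exp.2 (by gcongr))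

lemma measureReal_abs_ge_le (h : HasSubgaussianMGF X c P) {ε : ℝ} (hε : 0 ≤ ε) :
    P.real {ω | ε ≤ |X ω|} ≤ 2 * exp (-ε ^ 2 / (2 * c)) := by
  have h_split : {ω | ε ≤ |X ω|} = {ω | ε ≤ X ω} ∪ {ω | ε ≤ (-X) ω} := by
    ext ω
    simp only [Set.mem_union, Set.mem_ofPred_eq, Pi.neg_apply, le_abs]
  calc P.real {ω | ε ≤ |X ω|}
      ≤ P.real {ω | ε ≤ X ω} + P.real {ω | ε ≤ (-X) ω} := h_split ▸ measureReal_union_le _ _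
    _ ≤ exp (-ε ^ 2 / (2 * c)) + exp (-ε ^ 2 / (2 * c)) :=
        add_le_add (h.measure_ge_le hε) (h.neg.measure_ge_le hε)
    _ = 2 * exp (-ε ^ 2 / (2 * c)) := by ring

end HasSubgaussianMGF

lemma ae_tendsto_zero_of_tsum_measure_abs_ge_ne_top {Z : ℕ → Ω → ℝ}
    (h : ∀ ε > 0, ∑' n, P {ω | ε ≤ |Z n ω|} ≠ ∞) :
    ∀ᵐ ω ∂P, Tendsto (fun n ↦ Z n ω) atTop (𝓝 0) := by
  have h_ev : ∀ᵐ ω ∂P, ∀ k : ℕ, ∀ᶠ n in atTop, |Z n ω| < 1 / ((k : ℝ) + 1) :=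
    ae_all_iff.2 fun k ↦ (ae_eventually_notMem (h _ Nat.one_div_pos_of_nat)).mono
      fun ω hω ↦ hω.mono fun n hn ↦ by simpa using hn
  filter_upwards [h_ev] with ω hω
  refine Metric.tendsto_nhds.2 fun ε hε ↦ ?_
  obtain ⟨k, hk⟩ := exists_nat_one_div_lt hε
  filter_upwards [hω k] with n hn
  rw [Real.dist_0_eq_abs]
  exact hn.trans hk

section IndependentSums

variable {X : ℕ → Ω → ℝ} {c : ℕ → ℝ≥0}

lemma measureReal_abs_sum_range_div_ge_le (h_indep : iIndepFun X P) {n : ℕ}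
    (h_subG : ∀ i < n, HasSubgaussianMGF (X i) (c i) P) {K : ℝ≥0} (hK : 0 < K)
    (hcK : ∑ i ∈ range n, c i ≤ K * n) {ε : ℝ} (hε : 0 < ε) :
    P.real {ω | ε ≤ |(∑ i ∈ range n, X i ω) / n|} ≤ 2 * exp (n * -(ε ^ 2 / (2 * K))) := by
  rcases n.eq_zero_or_pos with rfl | hn
  · simp [hε.not_ge]
  have hn' : (0 : ℝ) < n := by exact_mod_cast hn
  have hS : HasSubgaussianMGF (fun ω ↦ ∑ i ∈ range n, X i ω) (K * n) P :=
    (HasSubgaussianMGF.sum_of_iIndepFun h_indep fun i hi ↦ h_subG i (mem_range.1 hi)).mono hcK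
  calc P.real {ω | ε ≤ |(∑ i ∈ range n, X i ω) / n|}
      = P.real {ω | ε * n ≤ |∑ i ∈ range n, X i ω|} := by
        simp_rw [abs_div, Nat.abs_cast, le_div_iff₀ hn']
    _ ≤ 2 * exp (-(ε * n) ^ 2 / (2 * (K * n : ℝ≥0))) := hS.measureReal_abs_ge_le (by positivity)
    _ = 2 * exp (n * -(ε ^ 2 / (2 * K))) := by
        push_cast
        congr 2
        field_simp

theorem ae_tendsto_sum_range_div_of_hasSubgaussianMGF {C : ℝ} (h_indep : iIndepFun X P)
    (h_subG : ∀ i, HasSubgaussianMGF (X i) (c i) P)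
    (hc : ∀ n : ℕ, ∑ i ∈ range n, (c i : ℝ) ≤ C * n) :
    ∀ᵐ ω ∂P, Tendsto (fun n : ℕ ↦ (∑ i ∈ range n, X i ω) / n) atTop (𝓝 0) := by
  have := h_indep.isProbabilityMeasure
  -- `C` may be `≤ 0`, while the Chernoff bound needs a positive variance proxy.
  set K : ℝ≥0 := C.toNNReal + 1
  have hK : 0 < K := by positivity
  have hcK : ∀ n : ℕ, ∑ i ∈ range n, c i ≤ K * n := fun n ↦ by
    rw [← NNReal.coe_le_coe]
    push_cast
    exact (hc n).trans (by gcongr; exact (Real.le_coe_toNNReal C).trans (by simp [K]))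
  refine ae_tendsto_zero_of_tsum_measure_abs_ge_ne_top fun ε hε ↦ ?_
  have h_sum : Summable fun n : ℕ ↦ 2 * exp (n * -(ε ^ 2 / (2 * K))) :=
    (Real.summable_exp_nat_mul_iff.2 (by simp; positivity)).mul_left 2
  refine ne_top_of_le_ne_top h_sum.tsum_ofReal_ne_top (ENNReal.tsum_le_tsum fun n ↦ ?_)
  refine (ENNReal.le_ofReal_iff_toReal_le (measure_ne_top _ _) (by positivity)).2 ?_
  exact measureReal_abs_sum_range_div_ge_le h_indep (fun i _ ↦ h_subG i) hK (hcK n) hε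

end IndependentSums

theorem ae_tendsto_sum_range_sub_sq_div_of_map_eq_gaussianReal {Y : ℕ → Ω → ℝ} {m : ℕ → ℝ}
    {v : ℝ≥0} (h_indep : iIndepFun Y P) (h_law : ∀ i, P.map (Y i) = gaussianReal (m i) v) :
    ∀ᵐ ω ∂P, Tendsto (fun n : ℕ ↦ (∑ i ∈ range n, (Y i ω - m i) ^ 2) / n) atTop (𝓝 v) := by
  have h_int : Integrable (fun ω ↦ (Y 0 ω - m 0) ^ 2) P := by
    simpa using ((hasSubgaussianMGF_sub_of_map_eq_gaussianReal (h_law 0)).memLp 2).integrable_sq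
  have h_pairwise : Pairwise fun i j ↦
      (fun ω ↦ (Y i ω - m i) ^ 2) ⟂ᵢ[P] (fun ω ↦ (Y j ω - m j) ^ 2) :=
    fun i j hij ↦ (h_indep.indepFun hij).comp (by fun_prop : Measurable fun x ↦ (x - m i) ^ 2)
      (by fun_prop : Measurable fun x ↦ (x - m j) ^ 2)
  have h_ident (i : ℕ) :
      IdentDistrib (fun ω ↦ (Y i ω - m i) ^ 2) (fun ω ↦ (Y 0 ω - m 0) ^ 2) P P := by
    have h_map := map_sub_const_eq_gaussianReal (h_law i)
    have h_map₀ := map_sub_const_eq_gaussianReal (h_law 0)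
    refine IdentDistrib.comp ⟨aemeasurable_of_map_eq_gaussianReal h_map,
      aemeasurable_of_map_eq_gaussianReal h_map₀, by rw [h_map, h_map₀]⟩
      (by fun_prop : Measurable fun x : ℝ ↦ x ^ 2)
  simpa [integral_sub_sq_of_map_eq_gaussianReal (h_law 0)] using
    strong_law_ae_real (fun i ω ↦ (Y i ω - m i) ^ 2) h_int h_pairwise h_ident

end ProbabilityTheory

theorem noncentral_chisq_lln_general {Ω : Type*} [MeasurableSpace Ω]
    (P : Measure Ω)
    (Y : ℕ → Ω → ℝ) (μ : ℕ → ℝ)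
    (hindep : iIndepFun Y P)
    (hlaw : ∀ i, P.map (Y i) = gaussianReal (μ i) 1)
    (hbdd : ∃ C : ℝ, ∀ p : ℕ, 1 ≤ p → (∑ i ∈ Finset.range p, (μ i) ^ 2) / p ≤ C) :
    ∀ᵐ ω ∂P, Tendsto
      (fun p : ℕ => (∑ i ∈ Finset.range p, (Y i ω) ^ 2) / p - 1 -
        (∑ i ∈ Finset.range p, (μ i) ^ 2) / p)
      atTop (nhds 0) := by
  obtain ⟨C, hC⟩ := hbdd
  -- `const_mul` gives the proxy as `⟨μ i ^ 2, _⟩ * 1`, a term `simp` cannot rewrite.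
  have h_subG (i : ℕ) : HasSubgaussianMGF (fun ω ↦ μ i * (Y i ω - μ i)) (‖μ i‖₊ ^ 2) P :=
    ((hasSubgaussianMGF_sub_of_map_eq_gaussianReal (hlaw i)).const_mul (μ i)).mono
      (le_of_eq (by ext; exact (mul_one _).trans (by simp)))
  have h_indep : iIndepFun (fun i ω ↦ μ i * (Y i ω - μ i)) P :=
    hindep.comp (fun i x ↦ μ i * (x - μ i)) fun i ↦ by fun_prop
  have h_sum_sq (p : ℕ) : ∑ i ∈ range p, ((‖μ i‖₊ ^ 2 : ℝ≥0) : ℝ) ≤ C * p := by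
    simp only [NNReal.coe_pow, coe_nnnorm, Real.norm_eq_abs, sq_abs]
    rcases p.eq_zero_or_pos with rfl | hp
    · simp
    · exact (div_le_iff₀ (by exact_mod_cast hp)).1 (hC p hp)
  filter_upwards [ae_tendsto_sum_range_sub_sq_div_of_map_eq_gaussianReal hindep hlaw,
    ae_tendsto_sum_range_div_of_hasSubgaussianMGF h_indep h_subG h_sum_sq] with ω h_sq h_lin
  have h_lim := (h_sq.sub_const 1).add (h_lin.const_mul 2)
  simp only [NNReal.coe_one, sub_self, mul_zero, add_zero] at h_lim
  refine h_lim.congr fun p ↦ ?_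
  have h_expand : ∑ i ∈ range p, Y i ω ^ 2 = ∑ i ∈ range p, (Y i ω - μ i) ^ 2
      + 2 * ∑ i ∈ range p, μ i * (Y i ω - μ i) + ∑ i ∈ range p, μ i ^ 2 := by
    rw [mul_sum, ← sum_add_distrib, ← sum_add_distrib]
    exact sum_congr rfl fun i _ ↦ by ring
  rw [h_expand]
  ring

/-- Strong law for squares of independent Gaussians with unit variance: if
`Y i ~ N(μ i, 1)` are independent, `Z p = ∑_{i<p} (Y i)²`, `λ p = ∑_{i<p} (μ i)²`, and
`(λ p / p)` is bounded, then `Z p / p - 1 - λ p / p → 0` almost surely. -/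
theorem noncentral_chisq_lln {Ω : Type*} [MeasurableSpace Ω]
    (P : Measure Ω) [IsProbabilityMeasure P]
    (Y : ℕ → Ω → ℝ) (μ : ℕ → ℝ)
    (hmeas : ∀ i, Measurable (Y i))
    (hindep : iIndepFun Y P)
    (hlaw : ∀ i, P.map (Y i) = gaussianReal (μ i) 1)
    (hbdd : ∃ C : ℝ, ∀ p : ℕ, 1 ≤ p → (∑ i ∈ Finset.range p, (μ i) ^ 2) / p ≤ C) :
    ∀ᵐ ω ∂P, Tendsto
      (fun p : ℕ => (∑ i ∈ Finset.range p, (Y i ω) ^ 2) / p - 1 -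
        (∑ i ∈ Finset.range p, (μ i) ^ 2) / p)
      atTop (nhds 0) :=
  noncentral_chisq_lln_general P Y μ hindep hlaw hbdd
end
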